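/- Paths are preserved under union: if (a, b) is an effective union for uf and y is reachable from x in the forest of uf, then the unique path from x to y in the forest of ufa_union uf a b equals the unique path from x to y in the forest of uf. In particular, existing arcs of the forest are unchanged and exactly one new arc (rep_of uf b, rep_of uf a) is added. -/

import Mathlib

/-- Proof terms for equalities. -/
inductive EqPrf (α : Type*) where
  | assm (i : ℕ)
  | refl (x : α)
  | sym (p : EqPrf α)
  | trans (p₁ p₂ : EqPrf α)

/-- The judgment `us ⊢ p : (x, y)`. -/
inductive Proves {α : Type*} (us : List (α × α)) : EqPrf α → α × α → Prop where
  | assm (i : ℕ) (x y : α) (hi : i < us.length) (h : us.get ⟨i, hi⟩ = (x, y)) :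
      Proves us (.assm i) (x, y)
  | refl (x : α) : Proves us (.refl x) (x, x)
  | sym (p : EqPrf α) (x y : α) : Proves us p (x, y) → Proves us (.sym p) (y, x)
  | trans (p₁ p₂ : EqPrf α) (x y z : α) :
      Proves us p₁ (x, y) → Proves us p₂ (y, z) → Proves us (.trans p₁ p₂) (x, z)

/-- Symmetric closure of a relation given as a set of pairs. -/
def symcl {α : Type*} (r : Set (α × α)) : Set (α × α) := r ∪ {p | (p.2, p.1) ∈ r}

/-- Equivalence closure: reflexive transitive closure of the symmetric closure. -/
def equivcl {α : Type*} (r : Set (α × α)) : Set (α × α) :=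
  {p | Relation.ReflTransGen (fun a b => (a, b) ∈ symcl r) p.1 p.2}

/-- Parent pointer of element `i` in the union-find list `l`. -/
def parentOf (l : List ℕ) (i : ℕ) : ℕ := l.getD i 0

/-- Domain (termination) predicate of the representative function. -/
inductive RepOfDom (l : List ℕ) : ℕ → Prop where
  | base (i : ℕ) (h : parentOf l i = i) : RepOfDom l i
  | step (i : ℕ) (h : parentOf l i ≠ i) (ih : RepOfDom l (parentOf l i)) : RepOfDom l i

/-- Fuelled iteration of parent pointers. -/
def repOfAux (l : List ℕ) : ℕ → ℕ → ℕ
  | 0, i => i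
  | n + 1, i => if parentOf l i = i then i else repOfAux l n (parentOf l i)

/-- Representative of `i`: follow parent pointers to a self-loop
(the fuel `l.length` suffices on well-formed structures). -/
def repOf (l : List ℕ) (i : ℕ) : ℕ := repOfAux l l.length i

/-- Union-find invariant. -/
def ufaInvar (l : List ℕ) : Prop := ∀ i < l.length, RepOfDom l i ∧ parentOf l i < l.length

/-- Abstraction: the partial equivalence relation represented by `l`. -/
def ufaα (l : List ℕ) : Set (ℕ × ℕ) :=
  {p | p.1 < l.length ∧ p.2 < l.length ∧ repOf l p.1 = repOf l p.2}

/-- Union operation. -/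
def ufaUnion (l : List ℕ) (x y : ℕ) : List ℕ := l.set (repOf l x) (repOf l y)

/-- Apply a list of unions. -/
def ufaUnions (l : List ℕ) (us : List (ℕ × ℕ)) : List ℕ :=
  us.foldl (fun l p => ufaUnion l p.1 p.2) l

/-- Initial union-find structure on `n` elements. -/
def ufaInit (n : ℕ) : List ℕ := List.range n

/-- Field of a relation given as a set of pairs. -/
def relField (r : Set (ℕ × ℕ)) : Set ℕ := {x | (∃ y, (x, y) ∈ r) ∨ ∃ y, (y, x) ∈ r}

/-- Merging the equivalence classes of `x` and `y` in a partial equivalence relation. -/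
def perUnion (R : Set (ℕ × ℕ)) (x y : ℕ) : Set (ℕ × ℕ) :=
  R ∪ {p | (p.1, x) ∈ R ∧ (y, p.2) ∈ R} ∪ {p | (p.1, y) ∈ R ∧ (x, p.2) ∈ R}

/-- Effective union. -/
def effUnion (l : List ℕ) (a b : ℕ) : Prop :=
  a ∈ relField (ufaα l) ∧ b ∈ relField (ufaα l) ∧ repOf l a ≠ repOf l b

/-- Effective list of unions. -/
def effUnions : List ℕ → List (ℕ × ℕ) → Prop
  | _, [] => True
  | l, (a, b) :: us => effUnion l a b ∧ effUnions (ufaUnion l a b) us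

/-- Arc of the union-find forest: from the parent of `c` to `c`, for non-roots `c`. -/
def ufaArc (l : List ℕ) (p c : ℕ) : Prop :=
  c < l.length ∧ parentOf l c = p ∧ p ≠ c

/-- `vs` is the vertex list of a directed walk from `x` to `y` in the forest of `l`. -/
def IsPathVerts (l : List ℕ) (x y : ℕ) (vs : List ℕ) : Prop :=
  vs.head? = some x ∧ vs.getLast? = some y ∧ List.Chain' (ufaArc l) vs

/-- Fuelled computation of the vertices on the path from the representative to `x`. -/
def awalkVertsAux (l : List ℕ) : ℕ → ℕ → List ℕ
  | 0, x => [x]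
  | n + 1, x => if parentOf l x = x then [x] else awalkVertsAux l n (parentOf l x) ++ [x]

/-- The vertices on the path from `repOf l x` to `x`. -/
def awalkVertsFromRep (l : List ℕ) (x : ℕ) : List ℕ := awalkVertsAux l l.length x

/-- Longest common prefix of two lists. -/
def longestCommonPrefix : List ℕ → List ℕ → List ℕ
  | a :: as, b :: bs => if a = b then a :: longestCommonPrefix as bs else []
  | _, _ => []

/-- Lowest common ancestor computation. -/
def ufaLca (l : List ℕ) (x y : ℕ) : ℕ :=
  (longestCommonPrefix (awalkVertsFromRep l x) (awalkVertsFromRep l y)).getLastD 0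

/-- Associated union of an element in the state `(uf, us)`:
the index of the union that set its parent pointer. -/
def auDs (uf : List ℕ) (us : List (ℕ × ℕ)) (z : ℕ) : Option ℕ :=
  if h : us = [] then none
  else
    if z = repOf (ufaUnions uf us.dropLast) (us.getLast h).1 then some us.dropLast.length
    else auDs uf us.dropLast z
termination_by us.length
decreasing_by
  simp only [List.length_dropLast]
  have : us ≠ [] := h
  have := List.length_pos_iff.mpr this
  omega

/-- Max on `Option ℕ` with `none` least. -/
def omax : Option ℕ → Option ℕ → Option ℕ
  | none, b => b
  | some i, none => some i
  | some i, some j => some (max i j)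

/-- Order on `Option ℕ` with `none` least. -/
def ole : Option ℕ → Option ℕ → Prop
  | none, _ => True
  | some _, none => False
  | some i, some j => i ≤ j

/-- Fuelled search for the newest associated union on the path from `d` up to `a`. -/
def findNewestAux (l : List ℕ) (au : ℕ → Option ℕ) : ℕ → ℕ → ℕ → Option ℕ
  | 0, _, _ => none
  | n + 1, a, d => if a = d then none else omax (au d) (findNewestAux l au n a (parentOf l d))

/-- Newest associated union on the path from ancestor `a` down to `d`
in the state `(uf, us)`. -/
def findNewestOnPath (uf : List ℕ) (us : List (ℕ × ℕ)) (a d : ℕ) : Option ℕ :=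
  findNewestAux (ufaUnions uf us) (auDs uf us) (ufaUnions uf us).length a d

/-- The naive explain operation, recursing by rolling back the last union. -/
def explain (uf : List ℕ) (us : List (ℕ × ℕ)) (x y : ℕ) : EqPrf ℕ :=
  if h : us = [] then .refl x
  else
    if repOf (ufaUnions uf us.dropLast) x = repOf (ufaUnions uf us.dropLast) y then
      explain uf us.dropLast x y
    else if repOf (ufaUnions uf us.dropLast) x =
        repOf (ufaUnions uf us.dropLast) (us.getLast h).1 then
      .trans (.trans (explain uf us.dropLast x (us.getLast h).1) (.assm us.dropLast.length))
        (explain uf us.dropLast (us.getLast h).2 y)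
    else
      .trans (.trans (explain uf us.dropLast x (us.getLast h).2)
          (.sym (.assm us.dropLast.length)))
        (explain uf us.dropLast (us.getLast h).1 y)
termination_by us.length
decreasing_by
  all_goals
    simp only [List.length_dropLast]
    have : us ≠ [] := h
    have := List.length_pos_iff.mpr this
    omega

/-- Newest union on the path from the lca to `x`. -/
def newestX (uf : List ℕ) (us : List (ℕ × ℕ)) (x y : ℕ) : Option ℕ :=
  findNewestOnPath uf us (ufaLca (ufaUnions uf us) x y) x

/-- Newest union on the path from the lca to `y`. -/
def newestY (uf : List ℕ) (us : List (ℕ × ℕ)) (x y : ℕ) : Option ℕ :=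
  findNewestOnPath uf us (ufaLca (ufaUnions uf us) x y) y

/-- The union recorded at a given (optional) index. -/
def unionAt (us : List (ℕ × ℕ)) (n : Option ℕ) : ℕ × ℕ := us.getD (n.getD 0) (0, 0)

/-- Domain (termination) predicate of the efficient explain operation. -/
inductive Explain'Dom (uf : List ℕ) (us : List (ℕ × ℕ)) : ℕ → ℕ → Prop where
  | refl (x : ℕ) : Explain'Dom uf us x x
  | newest_x (x y : ℕ) (hne : x ≠ y)
      (hle : ole (newestY uf us x y) (newestX uf us x y))
      (h1 : Explain'Dom uf us x (unionAt us (newestX uf us x y)).1)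
      (h2 : Explain'Dom uf us (unionAt us (newestX uf us x y)).2 y) :
      Explain'Dom uf us x y
  | newest_y (x y : ℕ) (hne : x ≠ y)
      (hgt : ¬ ole (newestY uf us x y) (newestX uf us x y))
      (h1 : Explain'Dom uf us x (unionAt us (newestY uf us x y)).2)
      (h2 : Explain'Dom uf us (unionAt us (newestY uf us x y)).1 y) :
      Explain'Dom uf us x y

/-- Recursion graph of the efficient explain operation `explain'`. -/
inductive Explain'G (uf : List ℕ) (us : List (ℕ × ℕ)) : ℕ → ℕ → EqPrf ℕ → Prop where
  | refl (x : ℕ) : Explain'G uf us x x (.refl x)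
  | newest_x (x y : ℕ) (px py : EqPrf ℕ) (hne : x ≠ y)
      (hle : ole (newestY uf us x y) (newestX uf us x y))
      (h1 : Explain'G uf us x (unionAt us (newestX uf us x y)).1 px)
      (h2 : Explain'G uf us (unionAt us (newestX uf us x y)).2 y py) :
      Explain'G uf us x y
        (.trans (.trans px (.assm ((newestX uf us x y).getD 0))) py)
  | newest_y (x y : ℕ) (px py : EqPrf ℕ) (hne : x ≠ y)
      (hgt : ¬ ole (newestY uf us x y) (newestX uf us x y))
      (h1 : Explain'G uf us x (unionAt us (newestY uf us x y)).2 px)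
      (h2 : Explain'G uf us (unionAt us (newestY uf us x y)).1 y py) :
      Explain'G uf us x y
        (.trans (.trans px (.sym (.assm ((newestY uf us x y).getD 0)))) py)


section PathPreservedAux

/-- parent pointer after a `set`. -/
lemma parentOf_set' (l : List ℕ) (i j v : ℕ) (hi : i < l.length) :
    parentOf (l.set i v) j = if j = i then v else parentOf l j := by
  unfold parentOf
  rw [List.getD_eq_getElem?_getD, List.getD_eq_getElem?_getD, List.getElem?_set]
  split
  · next h => subst h; simp [hi]
  · next h => rw [if_neg (fun hh => h hh.symm)]

lemma iter_lt' (l : List ℕ) (h : ufaInvar l) {i : ℕ} (hi : i < l.length) (n : ℕ) :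
    (parentOf l)^[n] i < l.length := by
  induction n with
  | zero => simpa
  | succ n ih => rw [Function.iterate_succ_apply']; exact (h _ ih).2

lemma ex_root_of_dom' {l : List ℕ} {i : ℕ} (h : RepOfDom l i) :
    ∃ n, parentOf l ((parentOf l)^[n] i) = (parentOf l)^[n] i := by
  induction h with
  | base i hi => exact ⟨0, by simpa⟩
  | step i hi hd ih =>
      obtain ⟨n, hn⟩ := ih
      exact ⟨n + 1, by rw [Function.iterate_succ_apply]; exact hn⟩

/-- the set of fuels at which the parent chain from `i` reaches a root. -/
def rootSet (l : List ℕ) (i : ℕ) : Set ℕ :=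
  {n | parentOf l ((parentOf l)^[n] i) = (parentOf l)^[n] i}

/-- number of steps from `i` to its root. -/
noncomputable def nstepsUF (l : List ℕ) (i : ℕ) : ℕ := sInf (rootSet l i)

lemma nsteps_root' {l : List ℕ} {i : ℕ} (hE : (rootSet l i).Nonempty) :
    parentOf l ((parentOf l)^[nstepsUF l i] i) = (parentOf l)^[nstepsUF l i] i :=
  Nat.sInf_mem hE

lemma nsteps_min' {l : List ℕ} {i : ℕ} {t : ℕ} (ht : t < nstepsUF l i) :
    parentOf l ((parentOf l)^[t] i) ≠ (parentOf l)^[t] i :=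
  fun hmem => Nat.notMem_of_lt_sInf ht (show t ∈ rootSet l i from hmem)

lemma mem_rootSet_shift {l : List ℕ} {i m t : ℕ} :
    (t ∈ rootSet l ((parentOf l)^[m] i)) ↔ (t + m ∈ rootSet l i) := by
  unfold rootSet
  rw [Set.mem_setOf_eq, Set.mem_setOf_eq, Function.iterate_add_apply]

lemma nsteps_shift' {l : List ℕ} {i : ℕ} (hE : (rootSet l i).Nonempty) {m : ℕ}
    (hm : m ≤ nstepsUF l i) :
    nstepsUF l ((parentOf l)^[m] i) = nstepsUF l i - m := by
  have hmem : nstepsUF l i - m ∈ rootSet l ((parentOf l)^[m] i) := by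
    rw [mem_rootSet_shift]
    have : nstepsUF l i - m + m = nstepsUF l i := by omega
    rw [this]
    exact Nat.sInf_mem hE
  refine le_antisymm (Nat.sInf_le hmem) ?_
  by_contra hlt
  push_neg at hlt
  have hmem' := Nat.sInf_mem (⟨_, hmem⟩ : (rootSet l ((parentOf l)^[m] i)).Nonempty)
  rw [mem_rootSet_shift] at hmem'
  exact Nat.notMem_of_lt_sInf (show nstepsUF l ((parentOf l)^[m] i) + m < nstepsUF l i by omega) hmem'

lemma nsteps_lt_len' (l : List ℕ) (h : ufaInvar l) {i : ℕ} (hi : i < l.length) :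
    nstepsUF l i < l.length := by
  have hE : (rootSet l i).Nonempty := ex_root_of_dom' (h i hi).1
  have hcard : (Finset.range (nstepsUF l i + 1)).card ≤ (Finset.range l.length).card := by
    refine Finset.card_le_card_of_injOn (fun t => (parentOf l)^[t] i) ?_ ?_
    · intro t _
      exact Finset.mem_range.mpr (iter_lt' l h hi t)
    · intro s hs t ht hst
      simp only [Finset.coe_range, Set.mem_Iio] at hs ht
      have hs' : s ≤ nstepsUF l i := by omega
      have ht' : t ≤ nstepsUF l i := by omega
      have h1 := nsteps_shift' hE hs'
      have h2 := nsteps_shift' hE ht'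
      have hst' : (parentOf l)^[s] i = (parentOf l)^[t] i := hst
      rw [hst'] at h1
      rw [h1] at h2
      omega
  simpa using hcard

lemma repOfAux_eq_iter (l : List ℕ) :
    ∀ n i, (rootSet l i).Nonempty → nstepsUF l i ≤ n →
      repOfAux l n i = (parentOf l)^[nstepsUF l i] i := by
  intro n
  induction n with
  | zero =>
      intro i hE hle
      have : nstepsUF l i = 0 := by omega
      rw [this]
      rfl
  | succ n ih =>
      intro i hE hle
      by_cases hr : parentOf l i = i
      · have h0 : nstepsUF l i = 0 := Nat.sInf_eq_zero.mpr (Or.inl (by simpa [rootSet]))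
        rw [h0]
        simp [repOfAux, hr]
      · have h0 : nstepsUF l i ≠ 0 := by
          intro hh
          have := nsteps_root' hE
          rw [hh] at this
          exact hr (by simpa using this)
        have h1le : 1 ≤ nstepsUF l i := by omega
        have hshift := nsteps_shift' hE h1le
        have hE' : (rootSet l ((parentOf l)^[1] i)).Nonempty := by
          refine ⟨nstepsUF l i - 1, ?_⟩
          rw [mem_rootSet_shift]
          have : nstepsUF l i - 1 + 1 = nstepsUF l i := by omega
          rw [this]
          exact Nat.sInf_mem hE
        have := ih ((parentOf l)^[1] i) hE' (by omega)
        rw [hshift] at this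
        have hiter : (parentOf l)^[nstepsUF l i - 1] ((parentOf l)^[1] i)
            = (parentOf l)^[nstepsUF l i] i := by
          rw [← Function.iterate_add_apply]
          congr 1
          omega
        show (if parentOf l i = i then i else repOfAux l n (parentOf l i)) = _
        rw [if_neg hr, ← hiter, ← this]
        rfl

lemma repOf_eq_iter (l : List ℕ) (h : ufaInvar l) {i : ℕ} (hi : i < l.length) :
    repOf l i = (parentOf l)^[nstepsUF l i] i :=
  repOfAux_eq_iter l l.length i (ex_root_of_dom' (h i hi).1) (le_of_lt (nsteps_lt_len' l h hi))

lemma repOf_root' (l : List ℕ) (h : ufaInvar l) {i : ℕ} (hi : i < l.length) :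
    parentOf l (repOf l i) = repOf l i := by
  rw [repOf_eq_iter l h hi]
  exact nsteps_root' (ex_root_of_dom' (h i hi).1)

lemma repOf_lt' (l : List ℕ) (h : ufaInvar l) {i : ℕ} (hi : i < l.length) :
    repOf l i < l.length := by
  rw [repOf_eq_iter l h hi]
  exact iter_lt' l h hi _

lemma reach_iter {l : List ℕ} {x y : ℕ} (h : Relation.ReflTransGen (ufaArc l) x y) :
    ∃ k, (parentOf l)^[k] y = x ∧
      ∀ t < k, ufaArc l ((parentOf l)^[t+1] y) ((parentOf l)^[t] y) := by
  induction h with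
  | refl => exact ⟨0, rfl, fun t ht => absurd ht (Nat.not_lt_zero t)⟩
  | @tail b c hxb hbc ih =>
      obtain ⟨k, hk, harc⟩ := ih
      obtain ⟨hc1, hc2, hc3⟩ := hbc
      refine ⟨k + 1, ?_, ?_⟩
      · rw [Function.iterate_succ_apply, hc2, hk]
      · intro t ht
        cases t with
        | zero =>
            simp only [zero_add, Function.iterate_one, Function.iterate_zero, id_eq, hc2]
            exact ⟨hc1, hc2, hc3⟩
        | succ s =>
            rw [Function.iterate_succ_apply (parentOf l) (s+1) c,
              Function.iterate_succ_apply (parentOf l) s c, hc2]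
            exact harc s (by omega)

end PathPreservedAux

set_option maxHeartbeats 2000000 in
/-- Paths are preserved under union, and the arcs of the forest after a union
are the old arcs plus exactly one new arc `(repOf l b, repOf l a)`. -/
theorem path_preserved_ufaUnion (l : List ℕ) (h : ufaInvar l) (a b x y : ℕ)
    (heff : effUnion l a b)
    (hreach : Relation.ReflTransGen (ufaArc l) x y) :
    (∀ vs, IsPathVerts (ufaUnion l a b) x y vs ↔ IsPathVerts l x y vs) ∧
      (∀ p c, ufaArc (ufaUnion l a b) p c ↔
        ufaArc l p c ∨ (p = repOf l b ∧ c = repOf l a)) := by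
  obtain ⟨ha', hb', hrne⟩ := heff
  have ha : a < l.length := by
    rcases ha' with ⟨z, hz⟩ | ⟨z, hz⟩
    · exact hz.1
    · exact hz.2.1
  have hb : b < l.length := by
    rcases hb' with ⟨z, hz⟩ | ⟨z, hz⟩
    · exact hz.1
    · exact hz.2.1
  have hra : repOf l a < l.length := repOf_lt' l h ha
  have hroota : parentOf l (repOf l a) = repOf l a := repOf_root' l h ha
  have hrootb : parentOf l (repOf l b) = repOf l b := repOf_root' l h hb
  have hlen' : (ufaUnion l a b).length = l.length := by
    simp [ufaUnion]
  have hpar : ∀ j, parentOf (ufaUnion l a b) j =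
      if j = repOf l a then repOf l b else parentOf l j :=
    fun j => parentOf_set' l (repOf l a) j (repOf l b) hra
  have harc : ∀ p c, ufaArc (ufaUnion l a b) p c ↔
      ufaArc l p c ∨ (p = repOf l b ∧ c = repOf l a) := by
    intro p c
    by_cases hc : c = repOf l a
    · subst hc
      constructor
      · rintro ⟨h1, h2, h3⟩
        rw [hpar, if_pos rfl] at h2
        exact Or.inr ⟨h2.symm, rfl⟩
      · rintro (⟨h1, h2, h3⟩ | ⟨h2, _⟩)
        · exact absurd (hroota.symm.trans h2).symm h3
        · subst h2
          exact ⟨by rw [hlen']; exact hra, by rw [hpar, if_pos rfl],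
            fun hh => hrne hh.symm⟩
    · constructor
      · rintro ⟨h1, h2, h3⟩
        rw [hpar, if_neg hc] at h2
        exact Or.inl ⟨by rw [← hlen']; exact h1, h2, h3⟩
      · rintro (⟨h1, h2, h3⟩ | ⟨h2, hc'⟩)
        · exact ⟨by rw [hlen']; exact h1, by rw [hpar, if_neg hc]; exact h2, h3⟩
        · exact absurd hc' hc
  refine ⟨?_, harc⟩
  intro vs
  have main : vs.head? = some x → vs.getLast? = some y →
      List.Chain' (ufaArc (ufaUnion l a b)) vs → List.Chain' (ufaArc l) vs := by
    intro h1 h2 h3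
    classical
    have hvs : vs ≠ [] := by intro hh; rw [hh] at h1; simp at h1
    have hpos : 0 < vs.length := List.length_pos_iff.mpr hvs
    obtain ⟨n, hnlen⟩ : ∃ n, vs.length = n + 1 := ⟨vs.length - 1, by omega⟩
    have hy : vs.getD n 0 = y := by
      have hid : vs.length - 1 = n := by omega
      rw [List.getLast?_eq_getElem?, hid] at h2
      rw [List.getD_eq_getElem?_getD, h2]
      rfl
    have hx : vs.getD 0 0 = x := by
      rw [List.head?_eq_getElem?, List.getElem?_eq_getElem hpos] at h1
      rw [List.getD_eq_getElem vs 0 hpos]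
      exact Option.some.inj h1
    simp only [List.Chain', List.isChain_iff_getElem] at h3 ⊢
    have hget : ∀ i, i < n →
        ufaArc (ufaUnion l a b) (vs.getD i 0) (vs.getD (i+1) 0) := by
      intro i hi
      have hh := h3 i (by omega)
      rwa [← List.getD_eq_getElem vs 0 (by omega),
        ← List.getD_eq_getElem vs 0 (by omega)] at hh
    have hC1 : ∀ i, i ≤ n →
        vs.getD (n - i) 0 = (parentOf (ufaUnion l a b))^[i] y := by
      intro i
      induction i with
      | zero => intro _; simpa using hy
      | succ i ih =>
          intro hi
          have hprev := ih (by omega)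
          obtain ⟨hA1, hA2, hA3⟩ := hget (n - (i+1)) (by omega)
          have hidx : n - (i+1) + 1 = n - i := by omega
          rw [hidx] at hA2
          rw [Function.iterate_succ_apply', ← hprev, ← hA2]
    by_cases hB : ∃ t, t < n ∧ (parentOf (ufaUnion l a b))^[t] y = repOf l a
    · exfalso
      have ht₀ := Nat.find_spec hB
      have hmin : ∀ t, t < Nat.find hB →
          (parentOf (ufaUnion l a b))^[t] y ≠ repOf l a := by
        intro t ht hh
        exact Nat.find_min hB ht ⟨by have := ht₀.1; omega, hh⟩
      have hC2 : ∀ t, t ≤ Nat.find hB →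
          (parentOf (ufaUnion l a b))^[t] y = (parentOf l)^[t] y := by
        intro t
        induction t with
        | zero => intro _; rfl
        | succ t ih =>
            intro ht
            have hne' : (parentOf l)^[t] y ≠ repOf l a := by
              have := hmin t (by omega)
              rwa [ih (by omega)] at this
            rw [Function.iterate_succ_apply', Function.iterate_succ_apply',
              ih (by omega), hpar, if_neg hne']
      obtain ⟨k, hk, hkarc⟩ := reach_iter hreach
      rcases lt_or_ge (Nat.find hB) k with hlt | hle
      · obtain ⟨hB1, hB2, hB3⟩ := hkarc (Nat.find hB) hlt
        have hial : (parentOf l)^[Nat.find hB] y = repOf l a := by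
          rw [← hC2 _ le_rfl]; exact ht₀.2
        rw [hial] at hB2 hB3
        exact hB3 (hB2.symm.trans hroota)
      · have harcs : ∀ t, t < n → ufaArc (ufaUnion l a b)
            ((parentOf (ufaUnion l a b))^[t+1] y)
            ((parentOf (ufaUnion l a b))^[t] y) := by
          intro t ht
          have h1' := hC1 (t+1) (by omega)
          have h2' := hC1 t (by omega)
          have harc' := hget (n - (t+1)) (by omega)
          have hidx : n - (t+1) + 1 = n - t := by omega
          rw [hidx, h2', h1'] at harc'
          exact harc'
        have hn_eq : n = Nat.find hB + 1 := by
          by_contra hne2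
          have hlt2 : Nat.find hB + 1 < n := by
            have := ht₀.1; omega
          obtain ⟨hB1, hB2, hB3⟩ := harcs (Nat.find hB + 1) hlt2
          have hchild : (parentOf (ufaUnion l a b))^[Nat.find hB + 1] y
              = repOf l b := by
            rw [Function.iterate_succ_apply', ht₀.2, hpar, if_pos rfl]
          rw [hchild] at hB2 hB3
          rw [hpar, if_neg (fun hh => hrne hh.symm), hrootb] at hB2
          exact hB3 hB2.symm
        have hx_rb : x = repOf l b := by
          have hxn := hC1 n le_rfl
          rw [Nat.sub_self, hx] at hxn
          rw [hn_eq, Function.iterate_succ_apply', ht₀.2, hpar, if_pos rfl] at hxn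
          exact hxn
        have hra_eq : repOf l a = (parentOf l)^[Nat.find hB] y := by
          rw [← hC2 _ le_rfl]; exact ht₀.2.symm
        have hsplit : (parentOf l)^[Nat.find hB] y
            = (parentOf l)^[Nat.find hB - k] x := by
          rw [← hk, ← Function.iterate_add_apply]
          congr 1
          omega
        have hcon : repOf l a = repOf l b := by
          rw [hra_eq, hsplit, hx_rb, Function.iterate_fixed hrootb]
        exact hrne hcon
    · intro i hi
      have hi' : i < n := by omega
      have harc' := hget i hi'
      have hchild : vs.getD (i+1) 0
          = (parentOf (ufaUnion l a b))^[n - (i+1)] y := by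
        have hh := hC1 (n - (i+1)) (by omega)
        rwa [show n - (n - (i+1)) = i + 1 from by omega] at hh
      have hres : ufaArc l (vs.getD i 0) (vs.getD (i+1) 0) := by
        rcases (harc _ _).mp harc' with hgood | ⟨_, hbad⟩
        · exact hgood
        · exfalso
          rw [hchild] at hbad
          exact hB ⟨n - (i+1), by omega, hbad⟩
      rwa [List.getD_eq_getElem vs 0 (show i < vs.length by omega),
        List.getD_eq_getElem vs 0 (show i + 1 < vs.length by omega)] at hres
  constructor
  · rintro ⟨h1, h2, h3⟩
    exact ⟨h1, h2, main h1 h2 h3⟩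
  · rintro ⟨h1, h2, h3⟩
    refine ⟨h1, h2, List.IsChain.imp ?_ h3⟩
    intro p c hpc
    exact (harc p c).mpr (Or.inl hpc)
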